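/- arXiv:2511.09145 — 6 statements merged into one kernel-verified Lean document; each statement's English description precedes it below -/
import Mathlib

section
/- Let δ > 0, θ ∈ (0,1], q ∈ (0,1), and C ≥ 0, and let a, r, e, x, y be nonnegative real numbers satisfying r² ≤ a², θ·a² ≤ r², x ≤ (a² − r²)^{1/2} + C·e, and y ≤ q·r + C·e. Then x² + y² ≤ (1+δ)·(1 − (1−q²)·θ)·a² + 2·(1+δ^{-1})·C²·e². -/
/-!
Bound `x` and `y` by Young's inequality `(s + t)² ≤ (1 + δ) s² + (1 + δ⁻¹) t²`, with `s` the
estimator part and `t = C e` the perturbation. The estimator parts add up to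
`a² - (1 - q²) r²`, and Dörfler marking `θ a² ≤ r²` turns this into `(1 - (1 - q²) θ) a²`.
-/

theorem add_sq_le_young {δ : ℝ} (hδ : 0 < δ) (s t : ℝ) :
    (s + t) ^ 2 ≤ (1 + δ) * s ^ 2 + (1 + δ⁻¹) * t ^ 2 := by
  -- `2 s t ≤ δ s² + δ⁻¹ t²` is `0 ≤ δ (s - δ⁻¹ t)²`
  have hsq : 0 ≤ δ * (s - δ⁻¹ * t) ^ 2 := by positivity
  have hδinv : δ * δ⁻¹ = 1 := mul_inv_cancel₀ hδ.ne'
  linear_combination hsq + (δ⁻¹ * t ^ 2 - 2 * s * t) * hδinv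

theorem sq_le_young_of_le_add {δ x s t : ℝ} (hδ : 0 < δ) (hx : 0 ≤ x) (hxst : x ≤ s + t) :
    x ^ 2 ≤ (1 + δ) * s ^ 2 + (1 + δ⁻¹) * t ^ 2 :=
  (pow_le_pow_left₀ hx hxst 2).trans (add_sq_le_young hδ s t)

theorem sq_sub_sq_add_sq_le_of_dorfler {θ q a r : ℝ} (hq : q ^ 2 ≤ 1)
    (hmark : θ * a ^ 2 ≤ r ^ 2) :
    a ^ 2 - r ^ 2 + (q * r) ^ 2 ≤ (1 - (1 - q ^ 2) * θ) * a ^ 2 := by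
  have := mul_le_mul_of_nonneg_left hmark (sub_nonneg.mpr hq)
  linear_combination this

theorem estimator_reduction_inequality_general
    (δ θ q C a r e x y : ℝ)
    (hδ : 0 < δ) (hq0 : 0 < q) (hq1 : q < 1)
    (hx : 0 ≤ x) (hy : 0 ≤ y)
    (hra : r ^ 2 ≤ a ^ 2) (hmark : θ * a ^ 2 ≤ r ^ 2)
    (hxb : x ≤ Real.sqrt (a ^ 2 - r ^ 2) + C * e)
    (hyb : y ≤ q * r + C * e) :
    x ^ 2 + y ^ 2 ≤
      (1 + δ) * (1 - (1 - q ^ 2) * θ) * a ^ 2 + 2 * (1 + δ⁻¹) * C ^ 2 * e ^ 2 := by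
  have hx2 := sq_le_young_of_le_add hδ hx hxb
  rw [Real.sq_sqrt (sub_nonneg.mpr hra)] at hx2
  have hy2 := sq_le_young_of_le_add hδ hy hyb
  have hred := sq_sub_sq_add_sq_le_of_dorfler (pow_le_one₀ hq0.le hq1.le) hmark
  linear_combination hx2 + hy2 + (1 + δ) * hred

/-- Estimator-reduction inequality: under Dörfler marking `θ·a² ≤ r²`, stability and
reduction bounds on `x` and `y`, Young's inequality yields
`x² + y² ≤ (1+δ)(1 − (1−q²)θ)a² + 2(1+δ⁻¹)C²e²`. -/
theorem estimator_reduction_inequality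
    (δ θ q C a r e x y : ℝ)
    (hδ : 0 < δ) (hθ0 : 0 < θ) (hθ1 : θ ≤ 1) (hq0 : 0 < q) (hq1 : q < 1)
    (hC : 0 ≤ C) (ha : 0 ≤ a) (hr : 0 ≤ r) (he : 0 ≤ e) (hx : 0 ≤ x) (hy : 0 ≤ y)
    (hra : r ^ 2 ≤ a ^ 2) (hmark : θ * a ^ 2 ≤ r ^ 2)
    (hxb : x ≤ Real.sqrt (a ^ 2 - r ^ 2) + C * e)
    (hyb : y ≤ q * r + C * e) :
    x ^ 2 + y ^ 2 ≤
      (1 + δ) * (1 - (1 - q ^ 2) * θ) * a ^ 2 + 2 * (1 + δ⁻¹) * C ^ 2 * e ^ 2 :=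
  estimator_reduction_inequality_general δ θ q C a r e x y hδ hq0 hq1 hx hy hra hmark hxb hyb
end

section
/- Let (a_ℓ)_{ℓ∈ℕ} and (e_ℓ)_{ℓ∈ℕ} be sequences of nonnegative real numbers, and let 0 < ρ < 1 and C₁, C₂ ≥ 0 be constants such that, for all ℓ ∈ ℕ, a_{ℓ+1}² ≤ ρ·a_ℓ² + C₁·e_ℓ², and the series Σ_{k=ℓ}^∞ e_k² converges with Σ_{k=ℓ}^∞ e_k² ≤ C₂·a_ℓ². Then there exist a constant C_lin > 0 and q_lin ∈ (0,1), depending only on ρ, C₁, C₂, such that a_{ℓ+n} ≤ C_lin · q_lin^n · a_ℓ for all ℓ, n ∈ ℕ. -/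
/-!
Write `b ℓ = a ℓ²`. Summing the perturbed contraction over a window and bounding the
perturbations by the tail hypothesis gives uniform summability of `b`:
`∑_{k<N} b (ℓ + k) ≤ M b ℓ` with `M = (1 + C₁ C₂) / (1 - ρ)`. Then the tails
`T ℓ = ∑_{k≥ℓ} b k` satisfy `T (ℓ + 1) = T ℓ - b ℓ ≤ (1 - M⁻¹) T ℓ`, so they decay
geometrically, and so does `b ℓ ≤ T ℓ ≤ M b ℓ`. Taking square roots gives the claim for `a`.
-/

open Finset

theorem sum_range_shift_le_of_perturbed_contraction {b c : ℕ → ℝ} {ρ K : ℝ}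
    (hb : ∀ n, 0 ≤ b n) (hρ0 : 0 ≤ ρ) (hρ1 : ρ < 1)
    (hrec : ∀ n, b (n + 1) ≤ ρ * b n + c n)
    (hc : ∀ ℓ N, ∑ k ∈ range N, c (ℓ + k) ≤ K * b ℓ) (ℓ N : ℕ) :
    ∑ k ∈ range N, b (ℓ + k) ≤ (1 + K) / (1 - ρ) * b ℓ := by
  set S := fun N => ∑ k ∈ range N, b (ℓ + k)
  have hmono : S N ≤ S (N + 1) := by
    simp only [S, sum_range_succ]
    linarith [hb (ℓ + N)]
  have hshift : S (N + 1) ≤ (1 + K) * b ℓ + ρ * S N :=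
    calc S (N + 1) = b ℓ + ∑ k ∈ range N, b (ℓ + k + 1) := by
          simp only [S, sum_range_succ', add_zero, add_assoc, add_comm]
      _ ≤ b ℓ + ∑ k ∈ range N, (ρ * b (ℓ + k) + c (ℓ + k)) := by
          gcongr with k; exact hrec _
      _ = b ℓ + ρ * S N + ∑ k ∈ range N, c (ℓ + k) := by
          rw [sum_add_distrib, ← mul_sum, add_assoc]
      _ ≤ (1 + K) * b ℓ + ρ * S N := by linarith [hc ℓ N]
  have hρS : ρ * S N ≤ ρ * S (N + 1) := mul_le_mul_of_nonneg_left hmono hρ0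
  rw [div_mul_eq_mul_div, le_div_iff₀ (by linarith)]
  linarith

theorem le_geometric_of_sum_range_le {b : ℕ → ℝ} {M : ℝ} (hb : ∀ n, 0 ≤ b n) (hM : 1 ≤ M)
    (hsum : ∀ ℓ N, ∑ k ∈ range N, b (ℓ + k) ≤ M * b ℓ) (ℓ n : ℕ) :
    b (ℓ + n) ≤ M * (1 - M⁻¹) ^ n * b ℓ := by
  set T := fun ℓ => ∑' k, b (ℓ + k)
  have hsummable ℓ : Summable fun k => b (ℓ + k) :=
    summable_of_sum_range_le (fun _ => hb _) (hsum ℓ)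
  have hT_le ℓ : T ℓ ≤ M * b ℓ := Real.tsum_le_of_sum_range_le (fun _ => hb _) (hsum ℓ)
  have hle_T ℓ : b ℓ ≤ T ℓ := by
    simpa using (hsummable ℓ).le_tsum 0 fun _ _ => hb _
  have hT_succ ℓ : T ℓ = b ℓ + T (ℓ + 1) := by
    simpa only [T, add_zero, add_assoc, add_comm 1] using (hsummable ℓ).tsum_eq_zero_add
  have hT_step ℓ : T (ℓ + 1) ≤ (1 - M⁻¹) * T ℓ := by
    have : M⁻¹ * T ℓ ≤ b ℓ := by
      rw [inv_mul_le_iff₀ (by linarith)]; exact hT_le ℓ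
    linarith [hT_succ ℓ]
  have hq : 0 ≤ 1 - M⁻¹ := sub_nonneg.2 (inv_le_one_of_one_le₀ hM)
  calc b (ℓ + n) ≤ T (ℓ + n) := hle_T _
    _ ≤ (1 - M⁻¹) ^ n * T (ℓ + 0) := le_geom (u := fun n => T (ℓ + n)) hq n fun k _ => hT_step _
    _ ≤ (1 - M⁻¹) ^ n * (M * b ℓ) := by gcongr; exact hT_le ℓ
    _ = M * (1 - M⁻¹) ^ n * b ℓ := by ring

theorem le_sqrt_mul_sqrt_pow_mul_of_sq_le {x y M q : ℝ} {n : ℕ} (hy : 0 ≤ y) (hM : 0 ≤ M)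
    (hq : 0 ≤ q) (h : x ^ 2 ≤ M * q ^ n * y ^ 2) : x ≤ √M * √q ^ n * y := by
  refine le_of_sq_le_sq ?_ (by positivity)
  rwa [mul_pow, mul_pow, Real.sq_sqrt hM, ← pow_mul, pow_mul', Real.sq_sqrt hq]

theorem r_linear_convergence_general
    (a e : ℕ → ℝ) (ha : ∀ ℓ, 0 ≤ a ℓ)
    (ρ C₁ C₂ : ℝ) (hρ0 : 0 < ρ) (hρ1 : ρ < 1) (hC₁ : 0 ≤ C₁) (hC₂ : 0 ≤ C₂)
    (hrec : ∀ ℓ, a (ℓ + 1) ^ 2 ≤ ρ * a ℓ ^ 2 + C₁ * e ℓ ^ 2)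
    (hsummable : ∀ ℓ, Summable (fun k : ℕ => e (ℓ + k) ^ 2))
    (htail : ∀ ℓ, ∑' k : ℕ, e (ℓ + k) ^ 2 ≤ C₂ * a ℓ ^ 2) :
    ∃ Clin : ℝ, 0 < Clin ∧ ∃ qlin : ℝ, 0 < qlin ∧ qlin < 1 ∧
      ∀ ℓ n : ℕ, a (ℓ + n) ≤ Clin * qlin ^ n * a ℓ := by
  set M := (1 + C₁ * C₂) / (1 - ρ)
  have hM : 1 < M := by
    rw [one_lt_div (by linarith)]
    linarith [mul_nonneg hC₁ hC₂]
  have hpert ℓ N : ∑ k ∈ range N, C₁ * e (ℓ + k) ^ 2 ≤ C₁ * C₂ * a ℓ ^ 2 := by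
    rw [← mul_sum, mul_assoc]
    gcongr
    exact ((hsummable ℓ).sum_le_tsum _ fun _ _ => sq_nonneg _).trans (htail ℓ)
  have hsum := sum_range_shift_le_of_perturbed_contraction (fun _ => sq_nonneg _) hρ0.le hρ1
    hrec hpert
  have hq : 0 < 1 - M⁻¹ := sub_pos.2 (inv_lt_one_of_one_lt₀ hM)
  refine ⟨√M, by positivity, √(1 - M⁻¹), Real.sqrt_pos.2 hq, ?_, fun ℓ n => ?_⟩
  · rw [Real.sqrt_lt' one_pos, one_pow]
    linarith [inv_pos.2 (zero_lt_one.trans hM)]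
  · exact le_sqrt_mul_sqrt_pow_mul_of_sq_le (ha ℓ) (by positivity) hq.le
      (le_geometric_of_sum_range_le (fun _ => sq_nonneg _) hM.le hsum ℓ n)

/-- Abstract R-linear convergence: a perturbed contraction for `a_ℓ²` together with
tail summability of the perturbations `e_ℓ²` controlled by `a_ℓ²` yields R-linear
decay `a_{ℓ+n} ≤ C_lin · q_lin^n · a_ℓ`. -/
theorem r_linear_convergence
    (a e : ℕ → ℝ) (ha : ∀ ℓ, 0 ≤ a ℓ) (he : ∀ ℓ, 0 ≤ e ℓ)
    (ρ C₁ C₂ : ℝ) (hρ0 : 0 < ρ) (hρ1 : ρ < 1) (hC₁ : 0 ≤ C₁) (hC₂ : 0 ≤ C₂)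
    (hrec : ∀ ℓ, a (ℓ + 1) ^ 2 ≤ ρ * a ℓ ^ 2 + C₁ * e ℓ ^ 2)
    (hsummable : ∀ ℓ, Summable (fun k : ℕ => e (ℓ + k) ^ 2))
    (htail : ∀ ℓ, ∑' k : ℕ, e (ℓ + k) ^ 2 ≤ C₂ * a ℓ ^ 2) :
    ∃ Clin : ℝ, 0 < Clin ∧ ∃ qlin : ℝ, 0 < qlin ∧ qlin < 1 ∧
      ∀ ℓ n : ℕ, a (ℓ + n) ≤ Clin * qlin ^ n * a ℓ :=
  r_linear_convergence_general a e ha ρ C₁ C₂ hρ0 hρ1 hC₁ hC₂ hrec hsummable htail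
end

section
/- Let (a_ℓ)_{ℓ∈ℕ} be a sequence of positive real numbers and (N_ℓ)_{ℓ∈ℕ} a sequence of nonnegative real numbers. Let s > 0, C₁ > 0, C_lin > 0, and q ∈ (0,1) be constants such that a_{ℓ+n} ≤ C_lin·q^n·a_ℓ for all ℓ, n ∈ ℕ, and N_ℓ ≤ C₁·Σ_{j=0}^{ℓ-1} a_j^{-1/s} for all ℓ ∈ ℕ. Then there exists a constant C > 0, depending only on s, C₁, C_lin, q, such that N_ℓ^s · a_ℓ ≤ C for all ℓ ∈ ℕ. -/
/-!
Linear convergence gives `a_ℓ ≤ C_lin q^(ℓ-j) a_j` for `j < ℓ`, i.e.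
`a_j^(-1/s) ≤ C_lin^(1/s) (q^(1/s))^(ℓ-j) a_ℓ^(-1/s)`. Summing this geometric series, the cumulative
sum `Σ_{j<ℓ} a_j^(-1/s)` is dominated by its last term: it is at most
`C_lin^(1/s) (1 - q^(1/s))⁻¹ a_ℓ^(-1/s)`. Hence `N_ℓ ≤ K a_ℓ^(-1/s)` with `K` independent of `ℓ`,
and raising to the power `s` gives `N_ℓ^s a_ℓ ≤ K^s`.
-/

open Finset

lemma sum_range_pow_sub_le {K : Type*} [Field K] [LinearOrder K] [IsStrictOrderedRing K]
    {t : K} (ht0 : 0 ≤ t) (ht1 : t < 1) (ℓ : ℕ) :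
    ∑ j ∈ range ℓ, t ^ (ℓ - j) ≤ (1 - t)⁻¹ :=
  calc ∑ j ∈ range ℓ, t ^ (ℓ - j)
      ≤ ∑ j ∈ range ℓ, t ^ (ℓ - 1 - j) :=
        sum_le_sum fun j hj => pow_le_pow_of_le_one ht0 ht1.le (by grind)
    _ = ∑ j ∈ range ℓ, t ^ j := sum_range_reflect (t ^ ·) ℓ
    _ ≤ t ^ 0 / (1 - t) := by rw [range_eq_Ico]; exact geom_sum_Ico_le_of_lt_one ht0 ht1
    _ = (1 - t)⁻¹ := by rw [pow_zero, one_div]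

namespace Real

lemma rpow_neg_le_mul_rpow_neg_of_le_mul {x y c p : ℝ} (hy : 0 < y) (hc : 0 < c)
    (hp : 0 ≤ p) (h : y ≤ c * x) : x ^ (-p) ≤ c ^ p * y ^ (-p) := by
  have hx : 0 < x := pos_of_mul_pos_right (hy.trans_le h) hc.le
  have hinv : x⁻¹ ≤ c * y⁻¹ := by
    rw [← div_eq_mul_inv, le_div_iff₀ hy, inv_mul_le_iff₀ hx, mul_comm]
    exact h
  calc x ^ (-p) = x⁻¹ ^ p := by rw [rpow_neg hx.le, inv_rpow hx.le]
    _ ≤ (c * y⁻¹) ^ p := rpow_le_rpow (inv_nonneg.2 hx.le) hinv hp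
    _ = c ^ p * y ^ (-p) := by rw [mul_rpow hc.le (inv_nonneg.2 hy.le), inv_rpow hy.le, rpow_neg hy.le]

lemma rpow_mul_le_of_le_mul_rpow_neg_inv {x a K s : ℝ} (hx : 0 ≤ x) (ha : 0 < a) (hK : 0 ≤ K)
    (hs : 0 < s) (h : x ≤ K * a ^ (-s⁻¹)) : x ^ s * a ≤ K ^ s := by
  have hpow : (K * a ^ (-s⁻¹)) ^ s = K ^ s * a⁻¹ := by
    rw [mul_rpow hK (rpow_nonneg ha.le _), ← rpow_mul ha.le, neg_mul,
      inv_mul_cancel₀ hs.ne', rpow_neg_one]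
  calc x ^ s * a ≤ (K * a ^ (-s⁻¹)) ^ s * a := by gcongr
    _ = K ^ s := by rw [hpow, inv_mul_cancel_right₀ ha.ne']

end Real

lemma sum_rpow_neg_le_of_le_mul_pow {a : ℕ → ℝ} {Clin q p : ℝ} (ha : ∀ ℓ, 0 < a ℓ)
    (hClin : 0 < Clin) (hq0 : 0 < q) (hq1 : q < 1) (hp : 0 < p)
    (hlin : ∀ ℓ n : ℕ, a (ℓ + n) ≤ Clin * q ^ n * a ℓ) (ℓ : ℕ) :
    ∑ j ∈ range ℓ, a j ^ (-p) ≤ Clin ^ p * (1 - q ^ p)⁻¹ * a ℓ ^ (-p) := by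
  have hterm : ∀ j ∈ range ℓ, a j ^ (-p) ≤ Clin ^ p * a ℓ ^ (-p) * (q ^ p) ^ (ℓ - j) := by
    intro j hj
    have hstep : a ℓ ≤ Clin * q ^ (ℓ - j) * a j := by
      simpa [Nat.add_sub_cancel' (mem_range.1 hj).le] using hlin j (ℓ - j)
    calc a j ^ (-p) ≤ (Clin * q ^ (ℓ - j)) ^ p * a ℓ ^ (-p) :=
          Real.rpow_neg_le_mul_rpow_neg_of_le_mul (ha ℓ) (by positivity) hp.le hstep
      _ = Clin ^ p * a ℓ ^ (-p) * (q ^ p) ^ (ℓ - j) := by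
          rw [Real.mul_rpow hClin.le (by positivity), ← Real.rpow_pow_comm hq0.le]
          ring
  calc ∑ j ∈ range ℓ, a j ^ (-p)
      ≤ Clin ^ p * a ℓ ^ (-p) * ∑ j ∈ range ℓ, (q ^ p) ^ (ℓ - j) := by
        rw [mul_sum]; exact sum_le_sum hterm
    _ ≤ Clin ^ p * a ℓ ^ (-p) * (1 - q ^ p)⁻¹ :=
        mul_le_mul_of_nonneg_left
          (sum_range_pow_sub_le (by positivity) (Real.rpow_lt_one hq0.le hq1 hp) ℓ)
          (mul_pos (Real.rpow_pos_of_pos hClin p) (Real.rpow_pos_of_pos (ha ℓ) _)).le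
    _ = Clin ^ p * (1 - q ^ p)⁻¹ * a ℓ ^ (-p) := by ring

/-- Concluding arithmetic of the optimal-convergence proof: if `a_ℓ` is R-linearly
convergent and `N_ℓ` is bounded by the cumulative sum `C₁ Σ_{j<ℓ} a_j^{-1/s}`, then
`N_ℓ^s · a_ℓ` is uniformly bounded. -/
theorem optimal_rate_arithmetic
    (a N : ℕ → ℝ) (ha : ∀ ℓ, 0 < a ℓ) (hN : ∀ ℓ, 0 ≤ N ℓ)
    (s C₁ Clin q : ℝ) (hs : 0 < s) (hC₁ : 0 < C₁) (hClin : 0 < Clin)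
    (hq0 : 0 < q) (hq1 : q < 1)
    (hlin : ∀ ℓ n : ℕ, a (ℓ + n) ≤ Clin * q ^ n * a ℓ)
    (hNb : ∀ ℓ : ℕ, N ℓ ≤ C₁ * ∑ j ∈ Finset.range ℓ, a j ^ (-(1 / s))) :
    ∃ C : ℝ, 0 < C ∧ ∀ ℓ : ℕ, N ℓ ^ s * a ℓ ≤ C := by
  rw [one_div] at hNb
  set K := C₁ * (Clin ^ s⁻¹ * (1 - q ^ s⁻¹)⁻¹)
  have hqs : q ^ s⁻¹ < 1 := Real.rpow_lt_one hq0.le hq1 (inv_pos.2 hs)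
  have hK : 0 < K := by
    have := sub_pos.2 hqs
    positivity
  refine ⟨K ^ s, Real.rpow_pos_of_pos hK s, fun ℓ => ?_⟩
  refine Real.rpow_mul_le_of_le_mul_rpow_neg_inv (hN ℓ) (ha ℓ) hK.le hs ?_
  calc N ℓ ≤ C₁ * ∑ j ∈ range ℓ, a j ^ (-s⁻¹) := hNb ℓ
    _ ≤ C₁ * (Clin ^ s⁻¹ * (1 - q ^ s⁻¹)⁻¹ * a ℓ ^ (-s⁻¹)) := by
        gcongr
        exact sum_rpow_neg_le_of_le_mul_pow ha hClin hq0 hq1 (inv_pos.2 hs) hlin ℓ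
    _ = K * a ℓ ^ (-s⁻¹) := by ring
end

section
/- Let C_stab > 0 and C_drel > 0 and let 0 < θ < 1/(1 + C_stab²·C_drel²). Then there exists q ∈ (0,1), depending only on θ, C_stab, C_drel, such that for all nonnegative real numbers η, η', ρ, e satisfying η' ≤ q·η, e ≤ C_drel·ρ, and η² ≤ ρ² + (η' + C_stab·e)², it holds that θ·η² ≤ ρ². -/
/-!
The hypothesis `η² ≤ ρ² + (η' + C_stab e)²` says that `η` is at most the Euclidean length of the
vector `(ρ, C_stab e + η')`. By the triangle inequality and `e ≤ C_drel ρ` this gives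
`η ≤ Λ ρ + η'` with `Λ = √(1 + C_stab² C_drel²)`, and absorbing `η' ≤ q η` leaves
`(1 - q) η ≤ Λ ρ`. The choice `q = 1 - √θ Λ`, which lies in `(0, 1)` exactly because
`0 < θ Λ² < 1`, turns this into `√θ η ≤ ρ`.
-/

open Real

lemma Real.sqrt_sq_add_sq_add_le (x y z : ℝ) : √(x ^ 2 + (y + z) ^ 2) ≤ √(x ^ 2 + y ^ 2) + |z| := by
  have hy : |y| ≤ √(x ^ 2 + y ^ 2) := by
    rw [← sqrt_sq_eq_abs]
    exact sqrt_le_sqrt (le_add_of_nonneg_left (sq_nonneg x))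
  rw [sqrt_le_left (by positivity), add_sq (√_), sq_sqrt (by positivity), sq_abs]
  linarith [le_abs_self (y * z), abs_mul y z,
    mul_le_mul_of_nonneg_right hy (abs_nonneg z)]

lemma Real.sqrt_sq_add_sq_le_of_sq_le {ρ b c : ℝ} (hρ : 0 ≤ ρ) (hb : b ^ 2 ≤ c * ρ ^ 2) :
    √(ρ ^ 2 + b ^ 2) ≤ √(1 + c) * ρ :=
  calc √(ρ ^ 2 + b ^ 2) ≤ √((1 + c) * ρ ^ 2) := sqrt_le_sqrt (by linarith)
    _ = √(1 + c) * ρ := by rw [sqrt_mul' _ (sq_nonneg ρ), sqrt_sq hρ]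

lemma le_sqrt_mul_add_of_sq_le_sq_add_sq {Cstab Cdrel η η' ρ e : ℝ} (hη' : 0 ≤ η') (hρ : 0 ≤ ρ)
    (he : 0 ≤ e) (hdrel : e ≤ Cdrel * ρ) (hest : η ^ 2 ≤ ρ ^ 2 + (η' + Cstab * e) ^ 2) :
    η ≤ √(1 + Cstab ^ 2 * Cdrel ^ 2) * ρ + η' := by
  have hstab : (Cstab * e) ^ 2 ≤ Cstab ^ 2 * Cdrel ^ 2 * ρ ^ 2 :=
    calc (Cstab * e) ^ 2 = Cstab ^ 2 * e ^ 2 := mul_pow _ _ _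
      _ ≤ Cstab ^ 2 * (Cdrel * ρ) ^ 2 := by gcongr
      _ = Cstab ^ 2 * Cdrel ^ 2 * ρ ^ 2 := by ring
  calc η ≤ √(ρ ^ 2 + (Cstab * e + η') ^ 2) := le_sqrt_of_sq_le (by rwa [add_comm (Cstab * e)])
    _ ≤ √(ρ ^ 2 + (Cstab * e) ^ 2) + |η'| := sqrt_sq_add_sq_add_le _ _ _
    _ ≤ √(1 + Cstab ^ 2 * Cdrel ^ 2) * ρ + η' := by
      rw [abs_of_nonneg hη']
      gcongr
      exact sqrt_sq_add_sq_le_of_sq_le hρ hstab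

theorem doerfler_marking_optimality_general
    (Cstab Cdrel θ : ℝ)
    (hθ0 : 0 < θ) (hθ : θ < 1 / (1 + Cstab ^ 2 * Cdrel ^ 2)) :
    ∃ q : ℝ, 0 < q ∧ q < 1 ∧
      ∀ η η' ρ e : ℝ, 0 ≤ η → 0 ≤ η' → 0 ≤ ρ → 0 ≤ e →
        η' ≤ q * η → e ≤ Cdrel * ρ →
        η ^ 2 ≤ ρ ^ 2 + (η' + Cstab * e) ^ 2 →
        θ * η ^ 2 ≤ ρ ^ 2 := by
  set Λ := √(1 + Cstab ^ 2 * Cdrel ^ 2)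
  have hΛ : 0 < Λ := sqrt_pos.mpr (by positivity)
  have hθΛ : √θ * Λ < 1 := by
    rw [← sqrt_mul hθ0.le, sqrt_lt' one_pos, one_pow]
    rwa [lt_div_iff₀ (by positivity)] at hθ
  refine ⟨1 - √θ * Λ, by linarith, by linarith [mul_pos (sqrt_pos.mpr hθ0) hΛ], ?_⟩
  intro η η' ρ e _ hη' hρ he hq hdrel hest
  have hred := le_sqrt_mul_add_of_sq_le_sq_add_sq hη' hρ he hdrel hest
  have hroot : √θ * η ≤ ρ := le_of_mul_le_mul_left (by linarith) hΛ
  calc θ * η ^ 2 = (√θ * η) ^ 2 := by rw [mul_pow, sq_sqrt hθ0.le]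
    _ ≤ ρ ^ 2 := by gcongr

/-- Arithmetic core of the optimality of Dörfler marking: for
`0 < θ < 1/(1 + C_stab²·C_drel²)` there is `q ∈ (0,1)` such that whenever
`η' ≤ q·η`, `e ≤ C_drel·ρ`, and `η² ≤ ρ² + (η' + C_stab·e)²`, the Dörfler
criterion `θ·η² ≤ ρ²` holds. -/
theorem doerfler_marking_optimality
    (Cstab Cdrel θ : ℝ) (hstab : 0 < Cstab) (hdrel : 0 < Cdrel)
    (hθ0 : 0 < θ) (hθ : θ < 1 / (1 + Cstab ^ 2 * Cdrel ^ 2)) :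
    ∃ q : ℝ, 0 < q ∧ q < 1 ∧
      ∀ η η' ρ e : ℝ, 0 ≤ η → 0 ≤ η' → 0 ≤ ρ → 0 ≤ e →
        η' ≤ q * η → e ≤ Cdrel * ρ →
        η ^ 2 ≤ ρ ^ 2 + (η' + Cstab * e) ^ 2 →
        θ * η ^ 2 ≤ ρ ^ 2 :=
  doerfler_marking_optimality_general Cstab Cdrel θ hθ0 hθ
end

section
/- Let X be a set and let S and T be finite families of nonempty subsets of X such that the members of S are pairwise disjoint, the members of T are pairwise disjoint, ⋃S = ⋃T, and every t ∈ T is contained in some s ∈ S. Then #(S \ T) ≤ #T − #S, #T − #S ≤ #(T \ S), and #(T \ S) ≤ 2·(#T − #S), where S \ T and T \ S denote set differences of the families and # denotes cardinality. -/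
/-!
Every refined element `s ∈ S \ T` is the union of the elements of `T` it contains, and there are
at least two of them, all outside `S`; distinct elements of `S` share none of them. Double counting
gives `2 · #(S \ T) ≤ #(T \ S)`, and since `#T - #S = #(T \ S) - #(S \ T)` all three inequalities
are rearrangements of this one.
-/

open Finset

namespace Finset

variable {X : Type*} {S T : Finset (Set X)} {s t : Set X}

theorem subset_of_refines_of_mem_inter (hSdisj : (S : Set (Set X)).Pairwise Disjoint)
    (hrefine : ∀ t ∈ T, ∃ s ∈ S, t ⊆ s) (ht : t ∈ T) (hs : s ∈ S) {x : X} (hxt : x ∈ t)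
    (hxs : x ∈ s) : t ⊆ s := by
  obtain ⟨s', hs', hts'⟩ := hrefine t ht
  obtain rfl : s' = s := Set.PairwiseDisjoint.elim_set (f := id) hSdisj hs' hs x (hts' hxt) hxs
  exact hts'

theorem exists_mem_subset_of_refines (hSdisj : (S : Set (Set X)).Pairwise Disjoint)
    (hcover : ⋃₀ (S : Set (Set X)) = ⋃₀ (T : Set (Set X))) (hrefine : ∀ t ∈ T, ∃ s ∈ S, t ⊆ s)
    (hs : s ∈ S) {x : X} (hx : x ∈ s) : ∃ t ∈ T, x ∈ t ∧ t ⊆ s := by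
  obtain ⟨t, ht, hxt⟩ : x ∈ ⋃₀ (T : Set (Set X)) := hcover ▸ ⟨s, hs, hx⟩
  exact ⟨t, ht, hxt, subset_of_refines_of_mem_inter hSdisj hrefine ht hs hxt hx⟩

theorem one_lt_card_filter_subset_of_notMem [DecidablePred (· ⊆ s)] (hne : s.Nonempty)
    (hsT : s ∉ T) (hcover : ∀ x ∈ s, ∃ t ∈ T, x ∈ t ∧ t ⊆ s) : 1 < #(T.filter (· ⊆ s)) := by
  obtain ⟨x, hx⟩ := hne
  obtain ⟨t₁, ht₁, hxt₁, ht₁s⟩ := hcover x hx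
  obtain ⟨y, hys, hyt₁⟩ := Set.not_subset.mp fun hst₁ => hsT (Set.Subset.antisymm ht₁s hst₁ ▸ ht₁)
  obtain ⟨t₂, ht₂, hyt₂, ht₂s⟩ := hcover y hys
  exact one_lt_card.mpr ⟨t₁, mem_filter.mpr ⟨ht₁, ht₁s⟩, t₂, mem_filter.mpr ⟨ht₂, ht₂s⟩,
    fun h => hyt₁ (h ▸ hyt₂)⟩

theorem two_mul_card_sdiff_le_card_sdiff [DecidableEq (Set X)] (hSne : ∀ s ∈ S, s.Nonempty)
    (hTne : ∀ t ∈ T, t.Nonempty) (hSdisj : (S : Set (Set X)).Pairwise Disjoint)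
    (hcover : ⋃₀ (S : Set (Set X)) = ⋃₀ (T : Set (Set X))) (hrefine : ∀ t ∈ T, ∃ s ∈ S, t ⊆ s) :
    2 * #(S \ T) ≤ #(T \ S) := by
  classical
  have hSdisj' : (S : Set (Set X)).PairwiseDisjoint id := hSdisj
  have children : ∀ s ∈ S \ T, 2 ≤ #((T \ S).bipartiteAbove (fun s t => t ⊆ s) s) := by
    intro s hs
    obtain ⟨hsS, hsT⟩ := mem_sdiff.mp hs
    have hchildren : T.filter (· ⊆ s) ⊆ (T \ S).filter (· ⊆ s) := by
      intro t ht
      obtain ⟨htT, hts⟩ := mem_filter.mp ht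
      obtain ⟨x, hx⟩ := hTne t htT
      have htS : t ∉ S := fun htS => hsT (hSdisj'.elim_set htS hsS x hx (hts hx) ▸ htT)
      exact mem_filter.mpr ⟨mem_sdiff.mpr ⟨htT, htS⟩, hts⟩
    exact (one_lt_card_filter_subset_of_notMem (hSne s hsS) hsT
      fun x hx => exists_mem_subset_of_refines hSdisj hcover hrefine hsS hx).trans_le
        (card_le_card hchildren)
  have parent : ∀ t ∈ T \ S, #((S \ T).bipartiteBelow (fun s t => t ⊆ s) t) ≤ 1 := by
    intro t ht
    obtain ⟨x, hx⟩ := hTne t (mem_sdiff.mp ht).1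
    refine card_le_one.mpr fun s₁ hs₁ s₂ hs₂ => ?_
    simp only [bipartiteBelow, mem_filter, mem_sdiff] at hs₁ hs₂
    exact hSdisj'.elim_set hs₁.1.1 hs₂.1.1 x (hs₁.2 hx) (hs₂.2 hx)
  simpa [mul_comm] using card_mul_le_card_mul _ children parent

end Finset

theorem partition_refinement_count_general
    {X : Type*} [DecidableEq (Set X)] (S T : Finset (Set X))
    (hSne : ∀ s ∈ S, s.Nonempty) (hTne : ∀ t ∈ T, t.Nonempty)
    (hSdisj : (S : Set (Set X)).Pairwise Disjoint)
    (hcover : ⋃₀ (S : Set (Set X)) = ⋃₀ (T : Set (Set X)))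
    (hrefine : ∀ t ∈ T, ∃ s ∈ S, t ⊆ s) :
    ((S \ T).card : ℤ) ≤ (T.card : ℤ) - S.card ∧
    (T.card : ℤ) - S.card ≤ ((T \ S).card : ℤ) ∧
    ((T \ S).card : ℤ) ≤ 2 * ((T.card : ℤ) - S.card) := by
  have hkey := two_mul_card_sdiff_le_card_sdiff hSne hTne hSdisj hcover hrefine
  have hS := card_sdiff_add_card_inter S T
  have hT := card_sdiff_add_card_inter T S
  rw [inter_comm] at hT
  omega

/-- Counting lemma for refinements of partitions: if `T` refines `S` (both finite
families of nonempty pairwise disjoint sets covering the same set), then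
`#(S \ T) ≤ #T − #S ≤ #(T \ S) ≤ 2(#T − #S)`. -/
theorem partition_refinement_count
    {X : Type*} [DecidableEq (Set X)] (S T : Finset (Set X))
    (hSne : ∀ s ∈ S, s.Nonempty) (hTne : ∀ t ∈ T, t.Nonempty)
    (hSdisj : (S : Set (Set X)).Pairwise Disjoint)
    (hTdisj : (T : Set (Set X)).Pairwise Disjoint)
    (hcover : ⋃₀ (S : Set (Set X)) = ⋃₀ (T : Set (Set X)))
    (hrefine : ∀ t ∈ T, ∃ s ∈ S, t ⊆ s) :
    ((S \ T).card : ℤ) ≤ (T.card : ℤ) - S.card ∧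
    (T.card : ℤ) - S.card ≤ ((T \ S).card : ℤ) ∧
    ((T \ S).card : ℤ) ≤ 2 * ((T.card : ℤ) - S.card) :=
  partition_refinement_count_general S T hSne hTne hSdisj hcover hrefine
end

section
/- Let X be a set and let T₀, T_H, T_h be finite families of nonempty subsets of X, each consisting of pairwise disjoint sets, with ⋃T₀ = ⋃T_H = ⋃T_h = X. Assume every a ∈ T_H is contained in some element of T₀, every b ∈ T_h is contained in some element of T₀, and for all a ∈ T_H and b ∈ T_h one has a ⊆ b, or b ⊆ a, or a ∩ b = ∅. Define the overlay O := { a ∈ T_H : ∃ b ∈ T_h, a ⊆ b } ∪ { b ∈ T_h : ∃ a ∈ T_H, b ⊆ a }. Then the members of O are nonempty and pairwise disjoint, ⋃O = X, every element of O is contained in some element of T_H and in some element of T_h, and #(O \ T_h) ≤ 2·#(T_H \ T₀). -/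
/-! Two members of the overlay taken from different families are nested or disjoint, and a
nested pair `a ⊆ b ⊆ a'` collapses to `a = b` because `a, a'` lie in one disjoint family; so the
overlay is again a partition. Each overlay element lies in `T_H` or in `T_h`, so the only
elements of the overlay outside `T_h` are elements `a ∈ T_H` contained in some `b ∈ T_h`. Such
an `a` cannot belong to `T₀`: otherwise `a ⊆ b ⊆ s` for some `s ∈ T₀`, so `a = s` by
disjointness of `T₀`, whence `a = b ∈ T_h`. Hence `#(O \ T_h) ≤ #(T_H \ T₀)`. -/

namespace Set

variable {X : Type*} {A B T : Set (Set X)}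

def overlay (A B : Set (Set X)) : Set (Set X) :=
  {a | a ∈ A ∧ ∃ b ∈ B, a ⊆ b} ∪ {b | b ∈ B ∧ ∃ a ∈ A, b ⊆ a}

theorem overlay_subset_union : overlay A B ⊆ A ∪ B := by
  rintro o (⟨hoA, -⟩ | ⟨hoB, -⟩)
  exacts [Or.inl hoA, Or.inr hoB]

theorem exists_subset_of_mem_overlay {o : Set X} (ho : o ∈ overlay A B) :
    (∃ a ∈ A, o ⊆ a) ∧ ∃ b ∈ B, o ⊆ b := by
  rcases ho with ⟨hoA, b, hb, hob⟩ | ⟨hoB, a, ha, hoa⟩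
  exacts [⟨⟨o, hoA, subset_rfl⟩, b, hb, hob⟩, ⟨⟨a, ha, hoa⟩, o, hoB, subset_rfl⟩]

theorem eq_of_subset_of_pairwise_disjoint {s t : Set X} (hA : A.Pairwise Disjoint)
    (hs : s ∈ A) (ht : t ∈ A) (hne : s.Nonempty) (hst : s ⊆ t) : s = t :=
  PairwiseDisjoint.eq_of_le (f := id) hA hs ht hne.ne_empty hst

theorem disjoint_of_subset_mem_of_subset_mem (hAne : ∀ a ∈ A, a.Nonempty)
    (hBne : ∀ b ∈ B, b.Nonempty) (hAdisj : A.Pairwise Disjoint) (hBdisj : B.Pairwise Disjoint)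
    (hnested : ∀ a ∈ A, ∀ b ∈ B, a ⊆ b ∨ b ⊆ a ∨ a ∩ b = ∅)
    {a b a' b' : Set X} (ha : a ∈ A) (hb : b ∈ B) (ha' : a' ∈ A) (hb' : b' ∈ B)
    (hab' : a ⊆ b') (hba' : b ⊆ a') (hab : a ≠ b) : Disjoint a b := by
  rcases hnested a ha b hb with h | h | h
  · have : a = a' := eq_of_subset_of_pairwise_disjoint hAdisj ha ha' (hAne a ha) (h.trans hba')
    exact absurd (h.antisymm (this ▸ hba')) hab
  · have : b = b' := eq_of_subset_of_pairwise_disjoint hBdisj hb hb' (hBne b hb) (h.trans hab')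
    exact absurd ((this ▸ hab').antisymm h) hab
  · exact disjoint_iff_inter_eq_empty.mpr h

theorem pairwise_disjoint_overlay (hAne : ∀ a ∈ A, a.Nonempty)
    (hBne : ∀ b ∈ B, b.Nonempty) (hAdisj : A.Pairwise Disjoint) (hBdisj : B.Pairwise Disjoint)
    (hnested : ∀ a ∈ A, ∀ b ∈ B, a ⊆ b ∨ b ⊆ a ∨ a ∩ b = ∅) :
    (overlay A B).Pairwise Disjoint := by
  rintro o₁ (⟨hA₁, b₁, hb₁, h₁⟩ | ⟨hB₁, a₁, ha₁, h₁⟩) o₂ (⟨hA₂, b₂, hb₂, h₂⟩ | ⟨hB₂, a₂, ha₂, h₂⟩)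
    hne
  · exact hAdisj hA₁ hA₂ hne
  · exact disjoint_of_subset_mem_of_subset_mem hAne hBne hAdisj hBdisj hnested
      hA₁ hB₂ ha₂ hb₁ h₁ h₂ hne
  · exact (disjoint_of_subset_mem_of_subset_mem hAne hBne hAdisj hBdisj hnested
      hA₂ hB₁ ha₁ hb₂ h₂ h₁ hne.symm).symm
  · exact hBdisj hB₁ hB₂ hne

theorem sUnion_overlay (hnested : ∀ a ∈ A, ∀ b ∈ B, a ⊆ b ∨ b ⊆ a ∨ a ∩ b = ∅) :
    ⋃₀ overlay A B = ⋃₀ A ∩ ⋃₀ B := by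
  apply Subset.antisymm
  · rintro x ⟨o, ho, hxo⟩
    obtain ⟨⟨a, ha, hoa⟩, b, hb, hob⟩ := exists_subset_of_mem_overlay ho
    exact ⟨⟨a, ha, hoa hxo⟩, b, hb, hob hxo⟩
  · rintro x ⟨⟨a, ha, hxa⟩, b, hb, hxb⟩
    rcases hnested a ha b hb with h | h | h
    · exact ⟨a, Or.inl ⟨ha, b, hb, h⟩, hxa⟩
    · exact ⟨b, Or.inr ⟨hb, a, ha, h⟩, hxb⟩
    · exact absurd (h ▸ ⟨hxa, hxb⟩ : x ∈ (∅ : Set X)) (notMem_empty x)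

theorem overlay_diff_subset (hTdisj : T.Pairwise Disjoint) (hAne : ∀ a ∈ A, a.Nonempty)
    (hBref : ∀ b ∈ B, ∃ s ∈ T, b ⊆ s) : overlay A B \ B ⊆ A \ T := by
  rintro a ⟨⟨haA, b, hb, hab⟩ | ⟨haB, -⟩, haB'⟩
  · refine ⟨haA, fun haT => haB' ?_⟩
    obtain ⟨s, hs, hbs⟩ := hBref b hb
    have has : a = s := eq_of_subset_of_pairwise_disjoint hTdisj haT hs (hAne a haA) (hab.trans hbs)
    exact hab.antisymm (has ▸ hbs) ▸ hb
  · exact absurd haB haB'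

end Set

open Set in
theorem overlay_estimate_general
    {X : Type*} (T₀ TH Th : Finset (Set X))
    (hTHne : ∀ s ∈ TH, s.Nonempty)
    (hThne : ∀ s ∈ Th, s.Nonempty)
    (hT₀disj : (T₀ : Set (Set X)).Pairwise Disjoint)
    (hTHdisj : (TH : Set (Set X)).Pairwise Disjoint)
    (hThdisj : (Th : Set (Set X)).Pairwise Disjoint)
    (hTHcov : ⋃₀ (TH : Set (Set X)) = Set.univ)
    (hThcov : ⋃₀ (Th : Set (Set X)) = Set.univ)
    (hThref : ∀ b ∈ Th, ∃ s ∈ T₀, b ⊆ s)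
    (hnested : ∀ a ∈ TH, ∀ b ∈ Th, a ⊆ b ∨ b ⊆ a ∨ a ∩ b = ∅) :
    ∀ O : Set (Set X),
      O = {a | a ∈ TH ∧ ∃ b ∈ Th, a ⊆ b} ∪ {b | b ∈ Th ∧ ∃ a ∈ TH, b ⊆ a} →
      (∀ o ∈ O, o.Nonempty) ∧
      O.Pairwise Disjoint ∧
      ⋃₀ O = Set.univ ∧
      (∀ o ∈ O, (∃ a ∈ TH, o ⊆ a) ∧ ∃ b ∈ Th, o ⊆ b) ∧
      (O \ (Th : Set (Set X))).ncard ≤ 2 * ((TH : Set (Set X)) \ (T₀ : Set (Set X))).ncard := by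
  intro O hO
  replace hO : O = overlay TH Th := hO
  subst hO
  refine ⟨fun o ho => (overlay_subset_union ho).elim (hTHne o) (hThne o),
    pairwise_disjoint_overlay hTHne hThne hTHdisj hThdisj hnested, ?_,
    fun o => exists_subset_of_mem_overlay, ?_⟩
  · rw [sUnion_overlay hnested, hTHcov, hThcov, univ_inter]
  · calc (overlay TH Th \ Th).ncard
        ≤ ((TH : Set (Set X)) \ T₀).ncard :=
          ncard_le_ncard (overlay_diff_subset hT₀disj hTHne hThref) TH.finite_toSet.sdiff
      _ ≤ 2 * ((TH : Set (Set X)) \ T₀).ncard := Nat.le_mul_of_pos_left _ two_pos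

/-- Overlay estimate: if `T_H` and `T_h` are two partition refinements of a common
initial partition `T₀` of `X` such that any element of `T_H` and any element of `T_h`
are nested or disjoint, then the overlay `O` is again a partition of `X` refining both
`T_H` and `T_h`, and `#(O \ T_h) ≤ 2 · #(T_H \ T₀)`. -/
theorem overlay_estimate
    {X : Type*} (T₀ TH Th : Finset (Set X))
    (hT₀ne : ∀ s ∈ T₀, s.Nonempty) (hTHne : ∀ s ∈ TH, s.Nonempty)
    (hThne : ∀ s ∈ Th, s.Nonempty)
    (hT₀disj : (T₀ : Set (Set X)).Pairwise Disjoint)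
    (hTHdisj : (TH : Set (Set X)).Pairwise Disjoint)
    (hThdisj : (Th : Set (Set X)).Pairwise Disjoint)
    (hT₀cov : ⋃₀ (T₀ : Set (Set X)) = Set.univ)
    (hTHcov : ⋃₀ (TH : Set (Set X)) = Set.univ)
    (hThcov : ⋃₀ (Th : Set (Set X)) = Set.univ)
    (hTHref : ∀ a ∈ TH, ∃ s ∈ T₀, a ⊆ s)
    (hThref : ∀ b ∈ Th, ∃ s ∈ T₀, b ⊆ s)
    (hnested : ∀ a ∈ TH, ∀ b ∈ Th, a ⊆ b ∨ b ⊆ a ∨ a ∩ b = ∅) :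
    ∀ O : Set (Set X),
      O = {a | a ∈ TH ∧ ∃ b ∈ Th, a ⊆ b} ∪ {b | b ∈ Th ∧ ∃ a ∈ TH, b ⊆ a} →
      (∀ o ∈ O, o.Nonempty) ∧
      O.Pairwise Disjoint ∧
      ⋃₀ O = Set.univ ∧
      (∀ o ∈ O, (∃ a ∈ TH, o ⊆ a) ∧ ∃ b ∈ Th, o ⊆ b) ∧
      (O \ (Th : Set (Set X))).ncard ≤ 2 * ((TH : Set (Set X)) \ (T₀ : Set (Set X))).ncard :=
  overlay_estimate_general T₀ TH Th hTHne hThne hT₀disj hTHdisj hThdisj hTHcov hThcov hThref hnested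
end
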